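/- Hypergeometric tail bound: let 1 ≤ k ≤ P be integers with k < P, and let J be a nonnegative integer with J ≤ k. Then C(k, J) · C(P − k, k − J) / C(P, k) ≤ (k² / (P − k))^J, where C(·,·) denotes binomial coefficients. -/

import Mathlib

/-!
Bound `C(k,J) ≤ k^J` and `C(P−k,k−J) ≤ C(P−J,k−J)`. Then
`C(P−J,k−J) / C(P,k) = k(k−1)⋯(k−J+1) / P(P−1)⋯(P−J+1) ≤ k^J / (P−k)^J`,
since every factor of the denominator is at least `P−k`.
-/

namespace Nat

theorem choose_sub_mul_descFactorial {n k s : ℕ} (hsk : s ≤ k) :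
    (n - s).choose (k - s) * n.descFactorial s = n.choose k * k.descFactorial s := by
  rw [descFactorial_eq_factorial_mul_choose, descFactorial_eq_factorial_mul_choose]
  calc (n - s).choose (k - s) * (s ! * n.choose s)
      = s ! * (n.choose s * (n - s).choose (k - s)) := by ring
    _ = s ! * (n.choose k * k.choose s) := by rw [choose_mul hsk]
    _ = n.choose k * (s ! * k.choose s) := by ring

theorem choose_sub_mul_pow_le {n k s : ℕ} (hsk : s ≤ k) (hkn : k ≤ n) :
    (n - s).choose (k - s) * (n - k) ^ s ≤ n.choose k * k ^ s := by
  have hdesc : (n - k) ^ s ≤ n.descFactorial s :=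
    (Nat.pow_le_pow_left (by omega) s).trans (pow_sub_le_descFactorial n s)
  refine Nat.le_of_mul_le_mul_right ?_ (descFactorial_pos.2 (hsk.trans hkn))
  calc (n - s).choose (k - s) * (n - k) ^ s * n.descFactorial s
      = n.choose k * k.descFactorial s * (n - k) ^ s := by
        rw [mul_right_comm, choose_sub_mul_descFactorial hsk]
    _ ≤ n.choose k * k ^ s * n.descFactorial s := by
        gcongr
        exact descFactorial_le_pow k s

theorem choose_mul_choose_sub_mul_pow_le {n k s : ℕ} (hsk : s ≤ k) (hkn : k ≤ n) :
    k.choose s * (n - k).choose (k - s) * (n - k) ^ s ≤ n.choose k * (k ^ 2) ^ s := by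
  calc k.choose s * (n - k).choose (k - s) * (n - k) ^ s
      ≤ k ^ s * ((n - s).choose (k - s) * (n - k) ^ s) := by
        rw [mul_assoc]
        gcongr
        exact choose_le_pow k s
    _ ≤ k ^ s * (n.choose k * k ^ s) := Nat.mul_le_mul_left _ (choose_sub_mul_pow_le hsk hkn)
    _ = n.choose k * (k ^ 2) ^ s := by ring

end Nat

theorem stmt14_general (P k J : ℕ) (hkP : k < P) (hJ : J ≤ k) :
    ((k.choose J : ℝ) * ((P - k).choose (k - J) : ℝ)) / (P.choose k : ℝ)
      ≤ ((k : ℝ) ^ 2 / ((P : ℝ) - (k : ℝ))) ^ J := by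
  have hsub : (P : ℝ) - k = ((P - k : ℕ) : ℝ) := by rw [Nat.cast_sub hkP.le]
  have hPk : (0 : ℝ) < ((P - k : ℕ) : ℝ) := by exact_mod_cast Nat.sub_pos_of_lt hkP
  have hC : (0 : ℝ) < P.choose k := by exact_mod_cast Nat.choose_pos hkP.le
  rw [hsub, div_pow, div_le_div_iff₀ hC (by positivity)]
  exact_mod_cast (Nat.choose_mul_choose_sub_mul_pow_le hJ hkP.le).trans_eq (mul_comm _ _)

/-- Hypergeometric tail bound: for integers `1 ≤ k < P` with `2k ≤ P` and `0 ≤ J ≤ k`,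
`C(k,J) C(P−k, k−J) / C(P,k) ≤ (k²/(P−k))^J`. -/
theorem stmt14 (P k J : ℕ) (hk : 1 ≤ k) (hkP : k < P) (h2k : 2 * k ≤ P) (hJ : J ≤ k) :
    ((k.choose J : ℝ) * ((P - k).choose (k - J) : ℝ)) / (P.choose k : ℝ)
      ≤ ((k : ℝ) ^ 2 / ((P : ℝ) - (k : ℝ))) ^ J :=
  stmt14_general P k J hkP hJ
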